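/- arXiv:2510.15814 — 4 statements merged into one kernel-verified Lean document; each statement's English description precedes it below -/
import Mathlib

section
/- Let G be a finite group acting on a finite set X, let V be a permutation representation of G, fix x ∈ X with stabilizer G_x = {g ∈ G : gx = x}, and let π_x : ℝ^X → ℝ be the x-th coordinate projection. Let ρ = ρ(𝒩) be the separation relation of a family 𝒩 of continuous G-equivariant maps V → ℝ^X. Then the pushforward f ↦ π_x ∘ f maps C_{G,ρ}(V, ℝ^X) := C_G(V, ℝ^X) ∩ C_ρ(V, ℝ^X) surjectively onto C_{G_x,ρ}(V, ℝ), the space of continuous G_x-invariant real-valued functions on V respecting ρ. -/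
open scoped BigOperators

noncomputable section EquivUnivPreamble

/-- Point-wise activation: apply `σ` coordinatewise. -/
def act (σ : ℝ → ℝ) {Z : Type} (v : Z → ℝ) : Z → ℝ := fun z => σ (v z)

/-- The action of a group element `g` on a real-valued function `v : Y → ℝ` induced by a
`G`-action on `Y` (the permutation representation `ℝ^Y`): `(g • v) y = v (g⁻¹ • y)`. -/
def pSMul {G Y : Type} [Group G] [MulAction G Y] (g : G) (v : Y → ℝ) : Y → ℝ :=
  fun y => v (g⁻¹ • y)

/-- `G`-equivariance of a map between permutation representations. -/
def Equivariant (G : Type) [Group G] {Y Z : Type} [MulAction G Y] [MulAction G Z]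
    (f : (Y → ℝ) → (Z → ℝ)) : Prop :=
  ∀ (g : G) (v : Y → ℝ), f (pSMul g v) = pSMul g (f v)

/-- A map between permutation representations is affine. -/
def IsAffine {Y Z : Type} (f : (Y → ℝ) → (Z → ℝ)) : Prop :=
  ∃ (φ : (Y → ℝ) →ₗ[ℝ] (Z → ℝ)) (b : Z → ℝ), ∀ v, f v = φ v + b

/-- A layer space: the set of maps `v ↦ ∑ᵢ cᵢ φⁱ(v) + b` where `φ¹, …, φᵏ` are fixed
`G`-equivariant linear maps and the bias `b` ranges over all functions constant on
`G`-orbits (i.e. all `∑ⱼ yⱼ 1_{Xⱼ}` with `Xⱼ` the orbits). -/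
def IsLayerSpace (G : Type) [Group G] {Y Z : Type} [MulAction G Y] [MulAction G Z]
    (M : Set ((Y → ℝ) → (Z → ℝ))) : Prop :=
  ∃ (k : ℕ) (φ : Fin k → ((Y → ℝ) →ₗ[ℝ] (Z → ℝ))),
    (∀ i, Equivariant G (φ i : (Y → ℝ) → (Z → ℝ))) ∧
    M = { f | ∃ (c : Fin k → ℝ) (b : Z → ℝ),
            (∀ (g : G) (z : Z), b (g • z) = b z) ∧
            ∀ v, f v = (∑ i, c i • φ i v) + b }

/-- `M^{k×h}`: the layer space `M` with input multiplicity `k` and output multiplicity `h`,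
`(v₁,…,v_k) ↦ (∑ⱼ f_{1,j}(vⱼ), …, ∑ⱼ f_{h,j}(vⱼ))`, identifying `V ⊗ ℝᵏ` with
`Fin k × Y → ℝ`. -/
def layerPow {Y Z : Type} (M : Set ((Y → ℝ) → (Z → ℝ))) (k h : ℕ) :
    Set ((Fin k × Y → ℝ) → (Fin h × Z → ℝ)) :=
  { F | ∃ f : Fin h → Fin k → ((Y → ℝ) → (Z → ℝ)),
      (∀ i j, f i j ∈ M) ∧
      ∀ (v : Fin k × Y → ℝ) (p : Fin h × Z), F v p = ∑ j, f p.1 j (fun y => v (j, y)) p.2 }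

/-- `M^{1×h}` under the canonical identification `V ⊗ ℝ¹ ≅ V` of the input. -/
def layerPowIn {Y Z : Type} (M : Set ((Y → ℝ) → (Z → ℝ))) (h : ℕ) :
    Set ((Y → ℝ) → (Fin h × Z → ℝ)) :=
  { F | ∃ f : Fin h → ((Y → ℝ) → (Z → ℝ)), (∀ i, f i ∈ M) ∧
      ∀ (v : Y → ℝ) (p : Fin h × Z), F v p = f p.1 v p.2 }

/-- `M^{k×1}` under the canonical identification `W ⊗ ℝ¹ ≅ W` of the output. -/
def layerPowOut {Y Z : Type} (M : Set ((Y → ℝ) → (Z → ℝ))) (k : ℕ) :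
    Set ((Fin k × Y → ℝ) → (Z → ℝ)) :=
  { F | ∃ f : Fin k → ((Y → ℝ) → (Z → ℝ)), (∀ j, f j ∈ M) ∧
      ∀ (v : Fin k × Y → ℝ) (z : Z), F v z = ∑ j, f j (fun y => v (j, y)) z }

/-- Evaluation of a chain of `d+1` layers with the point-wise activation `σ` between
consecutive layers: `φ_d ∘ σ̃ ∘ ⋯ ∘ σ̃ ∘ φ_0`. -/
def chainEval (σ : ℝ → ℝ) : ∀ (d : ℕ) (Y : Fin (d + 2) → Type)
    (φ : ∀ i : Fin (d + 1), (Y i.castSucc → ℝ) → (Y i.succ → ℝ)),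
    (Y 0 → ℝ) → (Y (Fin.last (d + 1)) → ℝ)
  | 0, _, φ => φ 0
  | (d + 1), Y, φ => fun v =>
      φ (Fin.last (d + 1))
        (act σ (chainEval σ d (fun i : Fin (d + 2) => Y i.castSucc)
          (fun i : Fin (d + 1) => φ i.castSucc) v))

/-- The neural space `N(M₀, …, M_d)` of a chain of `d+1` layer spaces. -/
def NeuralSpace (σ : ℝ → ℝ) (d : ℕ) (Y : Fin (d + 2) → Type)
    (M : ∀ i : Fin (d + 1), Set ((Y i.castSucc → ℝ) → (Y i.succ → ℝ))) :
    Set ((Y 0 → ℝ) → (Y (Fin.last (d + 1)) → ℝ)) :=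
  { F | ∃ φ : ∀ i : Fin (d + 1), (Y i.castSucc → ℝ) → (Y i.succ → ℝ),
      (∀ i, φ i ∈ M i) ∧ F = chainEval σ d Y φ }

/-- All networks `N(M₀^{1×k₁}, M₁^{k₁×k₂}, …, M_d^{k_d×k})` for the chain `M₀,…,M_d`, with
arbitrary interior multiplicities and fixed output multiplicity `k` (union over the interior
multiplicities). -/
def WPre (σ : ℝ → ℝ) : ∀ (d : ℕ) (Y : Fin (d + 2) → Type)
    (M : ∀ i : Fin (d + 1), Set ((Y i.castSucc → ℝ) → (Y i.succ → ℝ))) (k : ℕ),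
    Set ((Y 0 → ℝ) → (Fin k × Y (Fin.last (d + 1)) → ℝ))
  | 0, _, M, k => layerPowIn (M 0) k
  | (d + 1), Y, M, k =>
      { F | ∃ (k' : ℕ) (g : (Y 0 → ℝ) → (Fin k' × Y (Fin.last (d + 1)).castSucc → ℝ)),
          g ∈ WPre σ d (fun i : Fin (d + 2) => Y i.castSucc)
                (fun i : Fin (d + 1) => M i.castSucc) k' ∧
          ∃ f ∈ layerPow (M (Fin.last (d + 1))) k' k,
          F = fun v => f (act σ (g v)) }

/-- The network space `N(M₀^{1×k}, M₁^{k×k}, …, M_d^{k×k})`: all multiplicities equal to `k`. -/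
def WFix (σ : ℝ → ℝ) : ∀ (d : ℕ) (Y : Fin (d + 2) → Type)
    (M : ∀ i : Fin (d + 1), Set ((Y i.castSucc → ℝ) → (Y i.succ → ℝ))) (k : ℕ),
    Set ((Y 0 → ℝ) → (Fin k × Y (Fin.last (d + 1)) → ℝ))
  | 0, _, M, k => layerPowIn (M 0) k
  | (d + 1), Y, M, k =>
      { F | ∃ g ∈ WFix σ d (fun i : Fin (d + 2) => Y i.castSucc)
                (fun i : Fin (d + 1) => M i.castSucc) k,
          ∃ f ∈ layerPow (M (Fin.last (d + 1))) k k,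
          F = fun v => f (act σ (g v)) }

/-- Closure in the topology of uniform convergence on compact sets. -/
def UnifClosure {A B : Type} [TopologicalSpace A] [PseudoMetricSpace B]
    (S : Set (A → B)) : Set (A → B) :=
  { F | ∀ K : Set A, IsCompact K → ∀ ε : ℝ, 0 < ε → ∃ g ∈ S, ∀ x ∈ K, dist (F x) (g x) < ε }

/-- Separation relation of a family of functions. -/
def sepRel {A B : Type} (S : Set (A → B)) : Set (A × A) :=
  { p | ∀ f ∈ S, f p.1 = f p.2 }

/-- Entry-wise separation relation at the output entry `z`. -/
def sepRelAt {A Z : Type} (S : Set (A → (Z → ℝ))) (z : Z) : Set (A × A) :=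
  { p | ∀ f ∈ S, f p.1 z = f p.2 z }

/-- `C_ρ(A, B)`: continuous functions respecting the relation `ρ`. -/
def Crho {A B : Type} [TopologicalSpace A] [TopologicalSpace B] (ρ : Set (A × A)) :
    Set (A → B) :=
  { f | Continuous f ∧ ∀ p ∈ ρ, f p.1 = f p.2 }

/-- `C_ρ̄(A, ℝ^Z)` for a family of entry-wise relations `ρ̄ = (ρ_z)_{z ∈ Z}`. -/
def CrhoEntryRel {A Z : Type} [TopologicalSpace A] (ρ : Z → Set (A × A)) :
    Set (A → (Z → ℝ)) :=
  { f | Continuous f ∧ ∀ (z : Z), ∀ p ∈ ρ z, f p.1 z = f p.2 z }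

/-- `σ` is not a polynomial function. -/
def NotPolynomial (σ : ℝ → ℝ) : Prop :=
  ¬ ∃ p : Polynomial ℝ, ∀ x : ℝ, σ x = Polynomial.eval x p

/-- `c+1` widened copies of the layer space `M ⊆ Aff_G(ℝ^Z, ℝ^Z)`, from input multiplicity
`kin` to output multiplicity `kout` (union over interior multiplicities). -/
def WRep (σ : ℝ → ℝ) {Z : Type} (M : Set ((Z → ℝ) → (Z → ℝ))) :
    ∀ (_c kin kout : ℕ), Set ((Fin kin × Z → ℝ) → (Fin kout × Z → ℝ))
  | 0, kin, kout => layerPow M kin kout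
  | (c + 1), kin, kout =>
      { F | ∃ k, ∃ g ∈ WRep σ M c kin k, ∃ f ∈ layerPow M k kout,
          F = fun v => f (act σ (g v)) }

/-- `c+1` widened copies of `M`, starting at input multiplicity `kin` and ending with
output multiplicity `1` (canonically identified with `ℝ^Z`). -/
def WRepOut (σ : ℝ → ℝ) {Z : Type} (M : Set ((Z → ℝ) → (Z → ℝ))) :
    ∀ (_c kin : ℕ), Set ((Fin kin × Z → ℝ) → (Z → ℝ))
  | 0, kin => layerPowOut M kin
  | (c + 1), kin =>
      { F | ∃ k, ∃ g ∈ WRep σ M c kin k, ∃ f ∈ layerPowOut M k,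
          F = fun v => f (act σ (g v)) }

/-- `c+1` widened copies of `M`, with input multiplicity `1` (identified with `ℝ^Z`) and
output multiplicity `k`. -/
def WRepIn (σ : ℝ → ℝ) {Z : Type} (M : Set ((Z → ℝ) → (Z → ℝ))) :
    ∀ (_c k : ℕ), Set ((Z → ℝ) → (Fin k × Z → ℝ))
  | 0, k => layerPowIn M k
  | (c + 1), k =>
      { F | ∃ k', ∃ g ∈ WRepIn σ M c k', ∃ f ∈ layerPow M k' k,
          F = fun v => f (act σ (g v)) }

/-- The universality class `U(M, …, M)` of `c+2` copies of a layer space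
`M ⊆ Aff_G(ℝ^Z, ℝ^Z)`. -/
def UClassRep (σ : ℝ → ℝ) {Z : Type} [Fintype Z] (M : Set ((Z → ℝ) → (Z → ℝ))) (c : ℕ) :
    Set ((Z → ℝ) → (Z → ℝ)) :=
  UnifClosure { F | ∃ k, ∃ g ∈ WRepIn σ M c k, ∃ f ∈ layerPowOut M k,
      F = fun v => f (act σ (g v)) }

/-- The universality class `U(M₀, …, M_d, M, …, M)` of the chain `M₀, …, M_d` followed by
`c+1` copies of `M`. -/
def UClassPreRep (σ : ℝ → ℝ) (d : ℕ) (Y : Fin (d + 2) → Type)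
    [Fintype (Y (Fin.last (d + 1)))]
    (Mpre : ∀ i : Fin (d + 1), Set ((Y i.castSucc → ℝ) → (Y i.succ → ℝ)))
    (M : Set ((Y (Fin.last (d + 1)) → ℝ) → (Y (Fin.last (d + 1)) → ℝ))) (c : ℕ) :
    Set ((Y 0 → ℝ) → (Y (Fin.last (d + 1)) → ℝ)) :=
  UnifClosure { F | ∃ k, ∃ g ∈ WPre σ d Y Mpre k, ∃ f ∈ WRepOut σ M c k,
      F = fun v => f (act σ (g v)) }

/-- The universality class `U(M₀, …, M_d, N)` of the chain `M₀, …, M_d` followed by one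
extra layer space `N`. -/
def UClassApp1 (σ : ℝ → ℝ) (d : ℕ) (Y : Fin (d + 2) → Type)
    (M : ∀ i : Fin (d + 1), Set ((Y i.castSucc → ℝ) → (Y i.succ → ℝ)))
    {Z : Type} [Fintype Z]
    (N : Set ((Y (Fin.last (d + 1)) → ℝ) → (Z → ℝ))) : Set ((Y 0 → ℝ) → (Z → ℝ)) :=
  UnifClosure { F | ∃ k, ∃ g ∈ WPre σ d Y M k, ∃ f ∈ layerPowOut N k,
      F = fun v => f (act σ (g v)) }

/-- The universality class `U(M₀, …, M_d, N₁, N₂)` of the chain `M₀, …, M_d` followed by two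
extra layer spaces `N₁, N₂`. -/
def UClassApp2 (σ : ℝ → ℝ) (d : ℕ) (Y : Fin (d + 2) → Type)
    (M : ∀ i : Fin (d + 1), Set ((Y i.castSucc → ℝ) → (Y i.succ → ℝ)))
    {Z₁ Z₂ : Type} [Fintype Z₂]
    (N₁ : Set ((Y (Fin.last (d + 1)) → ℝ) → (Z₁ → ℝ)))
    (N₂ : Set ((Z₁ → ℝ) → (Z₂ → ℝ))) : Set ((Y 0 → ℝ) → (Z₂ → ℝ)) :=
  UnifClosure { F | ∃ k₁, ∃ g ∈ WPre σ d Y M k₁, ∃ k₂, ∃ m ∈ layerPow N₁ k₁ k₂,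
      ∃ f ∈ layerPowOut N₂ k₂, F = fun v => f (act σ (m (act σ (g v)))) }

/-- The universality class `U(M₁, M₂, M₃)` of three layer spaces on a common space `ℝ^Z`. -/
def UClass3 (σ : ℝ → ℝ) {Z : Type} [Fintype Z] (M₁ M₂ M₃ : Set ((Z → ℝ) → (Z → ℝ))) :
    Set ((Z → ℝ) → (Z → ℝ)) :=
  UnifClosure { F | ∃ k₁ k₂, ∃ g ∈ layerPowIn M₁ k₁, ∃ m ∈ layerPow M₂ k₁ k₂,
      ∃ f ∈ layerPowOut M₃ k₂, F = fun v => f (act σ (m (act σ (g v)))) }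

/-- The invariant layer space `I = Aff_G(ℝ^Y, ℝ)`: all `G`-invariant affine maps, with `ℝ`
realized as the trivial permutation representation `ℝ^{Unit}`. -/
def InvAff (G : Type) [Group G] {Y : Type} [MulAction G Y] :
    Set ((Y → ℝ) → (Unit → ℝ)) :=
  { f | IsAffine f ∧ ∀ (g : G) (v : Y → ℝ), f (pSMul g v) = f v }

/-- The fully connected layer space `L = Aff(ℝ, ℝ)`, with `ℝ` realized as `ℝ^{Unit}`. -/
def Lfull : Set ((Unit → ℝ) → (Unit → ℝ)) :=
  { f | ∃ a b : ℝ, f = fun v _ => a * v () + b }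

/-- The width-1 convolutional layer space `C ⊆ Aff_G(ℝ^X, ℝ^X)`:
`v ↦ a·v + (bias constant on `G`-orbits)`, i.e. `v ↦ a·v + ∑ⱼ yⱼ 1_{Xⱼ}`. -/
def ConvG (G : Type) [Group G] {X : Type} [MulAction G X] : Set ((X → ℝ) → (X → ℝ)) :=
  { f | ∃ (a : ℝ) (b : X → ℝ), (∀ (g : G) (z : X), b (g • z) = b z) ∧
      f = fun v z => a * v z + b z }

/-- The width-1 convolutional layer space for `S_n` acting on `ℝ^n`:
`C = { v ↦ a·v + b𝟙 }`. -/
def ConvC (n : ℕ) : Set ((Fin n → ℝ) → (Fin n → ℝ)) :=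
  { f | ∃ a b : ℝ, f = fun v i => a * v i + b }

/-- The PointNet (DeepSets) layer space for `S_n` acting on `ℝ^n`:
`P = { v ↦ (a·Id + c·𝟙𝟙ᵀ) v + b𝟙 }`. -/
def PointNetP (n : ℕ) : Set ((Fin n → ℝ) → (Fin n → ℝ)) :=
  { f | ∃ a c b : ℝ, f = fun v i => a * v i + c * (∑ j, v j) + b }
end EquivUnivPreamble

/-! Every `G_x`-invariant `h` is `π_x ∘ f` for the map `f v (g • x) = h (g⁻¹ • v)`, extended by
zero off the orbit of `x`: invariance under `G_x` makes `f` well defined, and `f` is then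
`G`-equivariant by construction. It respects `ρ(𝒩)` because `ρ(𝒩)` is stable under the diagonal
`G`-action, the maps in `𝒩` being equivariant. -/

section OrbitExtension

variable {G Y X : Type} [Group G] [MulAction G Y] [MulAction G X]

lemma pSMul_pSMul (a b : G) (v : Y → ℝ) : pSMul a (pSMul b v) = pSMul (a * b) v := by
  funext y
  simp [pSMul, mul_smul]

lemma pSMul_one (v : Y → ℝ) : pSMul (1 : G) v = v := by
  funext y
  simp [pSMul]

lemma continuous_pSMul (g : G) : Continuous (pSMul (Y := Y) g) :=
  continuous_pi fun _ => continuous_apply _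

lemma Equivariant.apply_pSMul_of_mem_stabilizer {f : (Y → ℝ) → (X → ℝ)}
    (hf : Equivariant G f) {x : X} {g : G} (hg : g ∈ MulAction.stabilizer G x) (v : Y → ℝ) :
    f (pSMul g v) x = f v x := by
  have hx : g⁻¹ • x = x := inv_smul_eq_iff.mpr hg.symm
  rw [hf g v, pSMul, hx]

lemma pSMul_mem_sepRel {𝒩 : Set ((Y → ℝ) → (X → ℝ))} (h𝒩 : ∀ f ∈ 𝒩, Equivariant G f)
    (g : G) {p : (Y → ℝ) × (Y → ℝ)} (hp : p ∈ sepRel 𝒩) :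
    (pSMul g p.1, pSMul g p.2) ∈ sepRel 𝒩 := fun f hf => by
  rw [h𝒩 f hf, h𝒩 f hf, hp f hf]

variable (G) in
noncomputable def orbitExtension (x : X) (h : (Y → ℝ) → ℝ) : (Y → ℝ) → (X → ℝ) :=
  open Classical in
  fun v x' => if hx' : x' ∈ MulAction.orbit G x then h (pSMul hx'.choose⁻¹ v) else 0

variable {x : X} {h : (Y → ℝ) → ℝ}

lemma orbitExtension_apply_smul
    (hh : ∀ g ∈ MulAction.stabilizer G x, ∀ v, h (pSMul g v) = h v) (g : G) (v : Y → ℝ) :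
    orbitExtension G x h v (g • x) = h (pSMul g⁻¹ v) := by
  have hgx : g • x ∈ MulAction.orbit G x := ⟨g, rfl⟩
  rw [orbitExtension, dif_pos hgx]
  set c := hgx.choose
  have hc : (g⁻¹ * c) ∈ MulAction.stabilizer G x := by
    rw [MulAction.mem_stabilizer_iff, mul_smul, inv_smul_eq_iff]
    exact hgx.choose_spec
  calc h (pSMul c⁻¹ v) = h (pSMul (g⁻¹ * c)⁻¹ (pSMul g⁻¹ v)) := by
        rw [pSMul_pSMul]; group
    _ = h (pSMul g⁻¹ v) := hh _ (inv_mem hc) _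

lemma orbitExtension_apply_of_notMem_orbit {x' : X} (hx' : x' ∉ MulAction.orbit G x)
    (v : Y → ℝ) : orbitExtension G x h v x' = 0 := by
  rw [orbitExtension, dif_neg hx']

lemma orbitExtension_apply_self
    (hh : ∀ g ∈ MulAction.stabilizer G x, ∀ v, h (pSMul g v) = h v) (v : Y → ℝ) :
    orbitExtension G x h v x = h v := by
  simpa [pSMul_one] using orbitExtension_apply_smul hh (1 : G) v

lemma continuous_orbitExtension (hc : Continuous h) : Continuous (orbitExtension G x h) :=
  continuous_pi fun x' => by
    unfold orbitExtension
    split_ifs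
    · exact hc.comp (continuous_pSMul _)
    · exact continuous_const

lemma equivariant_orbitExtension
    (hh : ∀ g ∈ MulAction.stabilizer G x, ∀ v, h (pSMul g v) = h v) :
    Equivariant G (orbitExtension G x h) := by
  intro g v
  funext x'
  rw [pSMul]
  by_cases hx' : x' ∈ MulAction.orbit G x
  · obtain ⟨c, rfl⟩ := hx'
    rw [← mul_smul, orbitExtension_apply_smul hh, orbitExtension_apply_smul hh, pSMul_pSMul,
      mul_inv_rev, inv_inv]
  · have hgx' : g⁻¹ • x' ∉ MulAction.orbit G x := fun ⟨c, hc⟩ =>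
      hx' ⟨g * c, show (g * c) • x = x' by rw [mul_smul, show c • x = g⁻¹ • x' from hc, smul_inv_smul]⟩
    rw [orbitExtension_apply_of_notMem_orbit hx', orbitExtension_apply_of_notMem_orbit hgx']

lemma orbitExtension_respects {ρ : Set ((Y → ℝ) × (Y → ℝ))}
    (hρ : ∀ (g : G), ∀ p ∈ ρ, (pSMul g p.1, pSMul g p.2) ∈ ρ)
    (hh : ∀ g ∈ MulAction.stabilizer G x, ∀ v, h (pSMul g v) = h v)
    (hhρ : ∀ p ∈ ρ, h p.1 = h p.2) (p : (Y → ℝ) × (Y → ℝ)) (hp : p ∈ ρ) :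
    orbitExtension G x h p.1 = orbitExtension G x h p.2 := by
  funext x'
  by_cases hx' : x' ∈ MulAction.orbit G x
  · obtain ⟨c, rfl⟩ := hx'
    rw [orbitExtension_apply_smul hh, orbitExtension_apply_smul hh]
    exact hhρ _ (hρ c⁻¹ p hp)
  · rw [orbitExtension_apply_of_notMem_orbit hx', orbitExtension_apply_of_notMem_orbit hx']

end OrbitExtension

theorem pushforward_surjective_onto_invariant_sep_constrained_general
    {G : Type} [Group G]
    {X : Type} [MulAction G X]
    {Y : Type} [MulAction G Y]
    (x : X)
    (𝒩 : Set ((Y → ℝ) → (X → ℝ)))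
    (h𝒩 : ∀ f ∈ 𝒩, Continuous f ∧ Equivariant G f) :
    (fun (f : (Y → ℝ) → (X → ℝ)) => fun v => f v x) ''
        { f | (Continuous f ∧ Equivariant G f) ∧ ∀ p ∈ sepRel 𝒩, f p.1 = f p.2 }
      = { h : (Y → ℝ) → ℝ | (Continuous h ∧
            ∀ g ∈ MulAction.stabilizer G x, ∀ v, h (pSMul g v) = h v) ∧
            ∀ p ∈ sepRel 𝒩, h p.1 = h p.2 } := by
  ext h
  constructor
  · rintro ⟨f, ⟨⟨hfc, hfe⟩, hfρ⟩, rfl⟩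
    exact ⟨⟨(continuous_apply x).comp hfc, fun g hg v => hfe.apply_pSMul_of_mem_stabilizer hg v⟩,
      fun p hp => congrFun (hfρ p hp) x⟩
  · rintro ⟨⟨hc, hh⟩, hhρ⟩
    have hρ : ∀ (g : G), ∀ p ∈ sepRel 𝒩, (pSMul g p.1, pSMul g p.2) ∈ sepRel 𝒩 :=
      fun g _ hp => pSMul_mem_sepRel (fun f hf => (h𝒩 f hf).2) g hp
    exact ⟨orbitExtension G x h,
      ⟨⟨continuous_orbitExtension hc, equivariant_orbitExtension hh⟩,
        orbitExtension_respects hρ hh hhρ⟩,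
      funext (orbitExtension_apply_self hh)⟩

/-- Proposition `prop:separation-projection`: the pushforward
`f ↦ π_x ∘ f` maps `C_{G,ρ}(V, ℝ^X) = C_G(V, ℝ^X) ∩ C_ρ(V, ℝ^X)` surjectively onto
`C_{G_x,ρ}(V, ℝ)`, where `ρ = ρ(𝒩)` is the separation relation of a family `𝒩` of
continuous `G`-equivariant maps `V → ℝ^X`. -/
theorem pushforward_surjective_onto_invariant_sep_constrained
    {G : Type} [Group G] [Fintype G]
    {X : Type} [Fintype X] [MulAction G X]
    {Y : Type} [Fintype Y] [MulAction G Y]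
    (x : X)
    (𝒩 : Set ((Y → ℝ) → (X → ℝ)))
    (h𝒩 : ∀ f ∈ 𝒩, Continuous f ∧ Equivariant G f) :
    (fun (f : (Y → ℝ) → (X → ℝ)) => fun v => f v x) ''
        { f | (Continuous f ∧ Equivariant G f) ∧ ∀ p ∈ sepRel 𝒩, f p.1 = f p.2 }
      = { h : (Y → ℝ) → ℝ | (Continuous h ∧
            ∀ g ∈ MulAction.stabilizer G x, ∀ v, h (pSMul g v) = h v) ∧
            ∀ p ∈ sepRel 𝒩, h p.1 = h p.2 } :=
  pushforward_surjective_onto_invariant_sep_constrained_general x 𝒩 h𝒩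
end

section
/- Let G be a finite group, V_0, …, V_d permutation representations of G, and M_i ⊆ Aff_G(V_{i-1}, V_i) layer spaces for i = 1, …, d, each a finite-dimensional real vector space of affine maps. For each i choose a basis ℬ_i of M_i and let M_i^ℚ := Span_ℚ ℬ_i be its rational span. Assume σ : ℝ → ℝ is continuous. Then ρ(N(M_1, …, M_d)) = ρ(N(M_1^ℚ, …, M_d^ℚ)); in particular, the separation relation of the rational neural space does not depend on the choice of the bases ℬ_1, …, ℬ_d. -/
open scoped BigOperators

/-!
A network in `N(M₀, …, M_d)` is determined by the coordinates of its layers in the bases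
`b i`, and for continuous `σ` its value at a fixed input depends continuously on these
coordinates. Rational coordinate tuples are dense, so two inputs that no rational network
separates are not separated by any real network either.
-/

section RationalNeuralSpace

open Set

lemma continuous_act {Z : Type} {σ : ℝ → ℝ} (hσ : Continuous σ) :
    Continuous (act σ : (Z → ℝ) → (Z → ℝ)) :=
  continuous_pi fun z => hσ.comp (continuous_apply z)

lemma IsLayerSpace.continuous_of_mem {G : Type} [Group G] {Y Z : Type} [Fintype Y]
    [MulAction G Y] [MulAction G Z] {M : Set ((Y → ℝ) → (Z → ℝ))}
    (hM : IsLayerSpace G M) {f : (Y → ℝ) → (Z → ℝ)} (hf : f ∈ M) : Continuous f := by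
  obtain ⟨k, φ, -, rfl⟩ := hM
  obtain ⟨c, bias, -, hf⟩ := hf
  rw [funext hf]
  exact (continuous_finsetSum _ fun i _ =>
    (φ i).continuous_of_finiteDimensional.const_smul (c i)).add continuous_const

lemma neuralSpace_mono {σ : ℝ → ℝ} {d : ℕ} {Y : Fin (d + 2) → Type}
    {M M' : ∀ i : Fin (d + 1), Set ((Y i.castSucc → ℝ) → (Y i.succ → ℝ))}
    (h : ∀ i, M i ⊆ M' i) : NeuralSpace σ d Y M ⊆ NeuralSpace σ d Y M' := by
  rintro _ ⟨φ, hφ, rfl⟩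
  exact ⟨φ, fun i => h i (hφ i), rfl⟩

lemma sepRel_anti {A B : Type} {S T : Set (A → B)} (h : S ⊆ T) : sepRel T ⊆ sepRel S :=
  fun _ hp f hf => hp f (h hf)

lemma sepRel_subset_of_denseRange {A B P Q : Type} [TopologicalSpace B] [T2Space B]
    [TopologicalSpace P] {S T : Set (A → B)} (F : P → A → B) (hF : ∀ a, Continuous (F · a))
    {ι : Q → P} (hι : DenseRange ι) (hS : ∀ q, F (ι q) ∈ S) (hT : T ⊆ range F) :
    sepRel S ⊆ sepRel T := by
  rintro ⟨α, β⟩ hp f hf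
  obtain ⟨p, rfl⟩ := hT hf
  have hαβ : (F · α) = (F · β) :=
    hι.equalizer (hF α) (hF β) (funext fun q => hp _ (hS q))
  exact congrFun hαβ p

lemma continuous_chainEval {σ : ℝ → ℝ} (hσ : Continuous σ) {P : Type} [TopologicalSpace P] :
    ∀ {d : ℕ} {Y : Fin (d + 2) → Type}
      {φ : P → ∀ i : Fin (d + 1), (Y i.castSucc → ℝ) → (Y i.succ → ℝ)},
      (∀ i, Continuous fun x : P × (Y i.castSucc → ℝ) => φ x.1 i x.2) →
      Continuous fun x : P × (Y 0 → ℝ) => chainEval σ d Y (φ x.1) x.2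
  | 0, _, _, hφ => hφ 0
  | d + 1, Y, φ, hφ => by
      have hprev := continuous_chainEval hσ (d := d) (Y := fun i => Y i.castSucc)
        (φ := fun p i => φ p i.castSucc) fun i => hφ i.castSucc
      exact (hφ (Fin.last (d + 1))).comp
        (continuous_fst.prodMk ((continuous_act hσ).comp hprev))

lemma Continuous.sum_smul_apply {P V W : Type} [TopologicalSpace P] [TopologicalSpace V]
    {n : ℕ} {b : Fin n → V → W → ℝ} (hb : ∀ j, Continuous (b j)) {c : P → Fin n → ℝ}
    {v : P → V} (hc : Continuous c) (hv : Continuous v) :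
    Continuous fun p => (∑ j, c p j • b j) (v p) := by
  simp only [Finset.sum_apply, Pi.smul_apply]
  exact continuous_finsetSum _ fun j _ => ((continuous_apply j).comp hc).smul ((hb j).comp hv)

lemma sum_ratCast_smul_mem_span_rat {E : Type} [AddCommGroup E] [Module ℝ E] [Module ℚ E]
    {n : ℕ} (b : Fin n → E) (q : Fin n → ℚ) :
    ∑ j, (q j : ℝ) • b j ∈ Submodule.span ℚ (range b) := by
  simp only [Rat.cast_smul_eq_qsmul]
  exact Submodule.sum_mem _ fun j _ => Submodule.smul_mem _ _ (Submodule.subset_span ⟨j, rfl⟩)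

end RationalNeuralSpace

theorem sepRel_rational_neural_space_general
    {G : Type} [Group G]
    {d : ℕ} {Y : Fin (d + 2) → Type} [∀ i, Fintype (Y i)] [∀ i, MulAction G (Y i)]
    (M : ∀ i : Fin (d + 1), Set ((Y i.castSucc → ℝ) → (Y i.succ → ℝ)))
    (hM : ∀ i, IsLayerSpace G (M i))
    (n : Fin (d + 1) → ℕ)
    (b : ∀ i : Fin (d + 1), Fin (n i) → ((Y i.castSucc → ℝ) → (Y i.succ → ℝ)))
    (hbspan : ∀ i, M i = ↑(Submodule.span ℝ (Set.range (b i))))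
    (σ : ℝ → ℝ) (hσ : Continuous σ) :
    sepRel (NeuralSpace σ d Y M)
      = sepRel (NeuralSpace σ d Y
          (fun i => ↑(Submodule.span ℚ (Set.range (b i))))) := by
  have hrat : ∀ i, (Submodule.span ℚ (Set.range (b i)) : Set _) ⊆ M i := fun i =>
    hbspan i ▸ Submodule.span_subset_span ℚ ℝ _
  have hb : ∀ i j, Continuous (b i j) := fun i j =>
    (hM i).continuous_of_mem (hbspan i ▸ Submodule.subset_span ⟨j, rfl⟩)
  have hnet : Continuous fun x : (∀ i, Fin (n i) → ℝ) × (Y 0 → ℝ) =>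
      chainEval σ d Y (fun i => ∑ j, x.1 i j • b i j) x.2 :=
    continuous_chainEval hσ (φ := fun (c : ∀ i, Fin (n i) → ℝ) i => ∑ j, c i j • b i j)
      fun i => .sum_smul_apply (hb i) ((continuous_apply i).comp continuous_fst) continuous_snd
  refine (sepRel_anti (neuralSpace_mono hrat)).antisymm ?_
  -- Parametrize the networks by their real coordinates in the bases `b i`.
  refine sepRel_subset_of_denseRange
    (fun c : ∀ i, Fin (n i) → ℝ => chainEval σ d Y fun i => ∑ j, c i j • b i j)
    (fun _ => hnet.comp (continuous_id.prodMk continuous_const))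
    (ι := Pi.map fun i => Pi.map fun _ => ((↑) : ℚ → ℝ))
    (DenseRange.piMap fun _ => DenseRange.piMap fun _ => Rat.denseRange_cast)
    (fun q => ⟨_, fun i => sum_ratCast_smul_mem_span_rat (b i) (q i), rfl⟩) ?_
  rintro _ ⟨φ, hφ, rfl⟩
  choose c hc using fun i =>
    (Submodule.mem_span_range_iff_exists_fun ℝ).mp (hbspan i ▸ hφ i)
  exact ⟨c, by simp only [hc]⟩

/-- Lemma `lemma:rational_neural_spaces`: if `ℬ_i = (b i)` is a basis of
the layer space `M_i` (a real vector space of affine maps) and `M_i^ℚ = Span_ℚ ℬ_i`, then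
for continuous `σ` the neural spaces have the same separation relation:
`ρ(N(M₀, …, M_d)) = ρ(N(M₀^ℚ, …, M_d^ℚ))`. -/
theorem sepRel_rational_neural_space
    {G : Type} [Group G] [Fintype G]
    {d : ℕ} {Y : Fin (d + 2) → Type} [∀ i, Fintype (Y i)] [∀ i, MulAction G (Y i)]
    (M : ∀ i : Fin (d + 1), Set ((Y i.castSucc → ℝ) → (Y i.succ → ℝ)))
    (hM : ∀ i, IsLayerSpace G (M i))
    (n : Fin (d + 1) → ℕ)
    (b : ∀ i : Fin (d + 1), Fin (n i) → ((Y i.castSucc → ℝ) → (Y i.succ → ℝ)))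
    (hbind : ∀ i, LinearIndependent ℝ (b i))
    (hbspan : ∀ i, M i = ↑(Submodule.span ℝ (Set.range (b i))))
    (σ : ℝ → ℝ) (hσ : Continuous σ) :
    sepRel (NeuralSpace σ d Y M)
      = sepRel (NeuralSpace σ d Y
          (fun i => ↑(Submodule.span ℚ (Set.range (b i))))) :=
  sepRel_rational_neural_space_general M hM n b hbspan σ hσ
end

section
/- Let V = ℝ^d with its usual topology, let ρ be a closed equivalence relation on V, and let {f_n}_{n∈ℕ} be a family of continuous maps f_n : V → ℝ^m whose separation relation equals ρ, i.e. ρ({f_n}_{n∈ℕ}) = ρ. Then for every h ∈ C_ρ(V), every compact set K ⊆ V, and every ε > 0, there exist n ∈ ℕ and a continuous function A : (ℝ^m)^n → ℝ such that sup_{x ∈ K} |A(f_1(x), …, f_n(x)) − h(x)| < ε. Equivalently, the set ∪_{n≥1} { A ∘ (f_1, …, f_n) : A ∈ C((ℝ^m)^n, ℝ) } is dense in C_ρ(V) in the topology of uniform convergence on compact sets. -/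
open scoped BigOperators

/-!
The pairs of points of `K` at which `h` differs by at least `ε` form a compact subset of `K × K`.
Each such pair is separated by some `f i`, so the increasing open sets of pairs separated by more
than `1 / (n + 1)` by one of `f 0, …, f (n - 1)` cover it, and a single one of them already does.
Hence `h` varies by less than `ε` between points of `K` whose images under
`F = (f 0, …, f (n - 1))` are `δ`-close. As `h` is bounded on `K`, it is then Lipschitz up to `ε`
with respect to the pseudometric pulled back by `F`, and McShane's formula
`A w = ⨅ z ∈ K, h z + L * dist w (F z)` gives a Lipschitz `A` with `|A ∘ F - h| ≤ ε` on `K`.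
-/

open Set
open scoped NNReal

theorem IsCompact.exists_nat_forall_dist_le_imp_dist_lt {X E F : Type*} [TopologicalSpace X]
    [MetricSpace E] [PseudoMetricSpace F] {K : Set X} (hK : IsCompact K) {f : ℕ → X → E}
    (hf : ∀ i, Continuous (f i)) {h : X → F} (hh : Continuous h)
    (hfh : ∀ x y, (∀ i, f i x = f i y) → h x = h y) {ε : ℝ} (hε : 0 < ε) :
    ∃ n : ℕ, ∀ x ∈ K, ∀ y ∈ K,
      (∀ i < n, dist (f i x) (f i y) ≤ 1 / (n + 1)) → dist (h x) (h y) < ε := by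
  set U : ℕ → Set (X × X) :=
    fun n => ⋃ i < n, {p | 1 / ((n : ℝ) + 1) < dist (f i p.1) (f i p.2)}
  have hUopen : ∀ n, IsOpen (U n) := fun n => isOpen_biUnion fun i _ =>
    isOpen_lt continuous_const (((hf i).comp continuous_fst).dist ((hf i).comp continuous_snd))
  have hUmono : Monotone U := by
    intro n n' hnn' p hp
    obtain ⟨i, hi, hlt⟩ := mem_iUnion₂.1 hp
    have : 1 / ((n' : ℝ) + 1) ≤ 1 / ((n : ℝ) + 1) := by gcongr
    exact mem_iUnion₂.2 ⟨i, hi.trans_le hnn', this.trans_lt hlt⟩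
  have hfar : IsCompact ((K ×ˢ K) ∩ {p | ε ≤ dist (h p.1) (h p.2)}) :=
    (hK.prod hK).inter_right
      (isClosed_le continuous_const ((hh.comp continuous_fst).dist (hh.comp continuous_snd)))
  have hcover : (K ×ˢ K) ∩ {p | ε ≤ dist (h p.1) (h p.2)} ⊆ ⋃ n, U n := by
    rintro p ⟨-, hp : ε ≤ dist (h p.1) (h p.2)⟩
    obtain ⟨i, hi⟩ : ∃ i, f i p.1 ≠ f i p.2 := by
      by_contra! hall
      have := hfh _ _ hall
      simp only [this, dist_self] at hp
      linarith
    obtain ⟨N, hN⟩ := exists_nat_one_div_lt (dist_pos.2 hi)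
    have : 1 / ((N + i + 1 : ℕ) + 1 : ℝ) ≤ 1 / ((N : ℝ) + 1) := by
      gcongr
      linarith
    exact mem_iUnion.2 ⟨N + i + 1, mem_iUnion₂.2 ⟨i, by omega, this.trans_lt hN⟩⟩
  obtain ⟨n, hn⟩ := hfar.elim_directed_cover U hUopen hcover hUmono.directed_le
  refine ⟨n, fun x hx y hy hclose => ?_⟩
  by_contra! hfar_xy
  obtain ⟨i, hi, hlt⟩ := mem_iUnion₂.1 (hn (show (x, y) ∈ _ from ⟨⟨hx, hy⟩, hfar_xy⟩))
  exact (hclose i hi).not_gt hlt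

theorem exists_lipschitzWith_abs_comp_sub_le {X W : Type*} [PseudoMetricSpace W] {G : X → W}
    {h : X → ℝ} {K : Set X} {L : ℝ≥0} {ε : ℝ}
    (hGh : ∀ x ∈ K, ∀ y ∈ K, h x ≤ h y + ε + L * dist (G x) (G y)) :
    ∃ A : W → ℝ, LipschitzWith L A ∧ ∀ x ∈ K, |A (G x) - h x| ≤ ε := by
  rcases K.eq_empty_or_nonempty with rfl | ⟨x₀, hx₀⟩
  · exact ⟨fun _ => 0, LipschitzWith.const' 0, by simp⟩
  have : Nonempty K := ⟨⟨x₀, hx₀⟩⟩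
  -- `x = z` bounds `A (G x)` above by `h x`; `hGh` bounds every term below by `h x - ε`.
  set A : W → ℝ := fun w => ⨅ z : K, (h z + L * dist w (G z))
  have hbdd : ∀ w, BddBelow (range fun z : K => h z + L * dist w (G z)) := by
    refine fun w => ⟨h x₀ - ε - L * dist w (G x₀), ?_⟩
    rintro _ ⟨z, rfl⟩
    have := hGh x₀ hx₀ z z.2
    have := dist_triangle_left (G x₀) (G z) w
    have : (L : ℝ) * dist (G x₀) (G z) ≤ L * (dist w (G x₀) + dist w (G z)) := by gcongr
    dsimp only
    linarith
  refine ⟨A, LipschitzWith.of_le_add_mul L fun w w' => ?_, fun x hx => abs_sub_le_iff.2 ⟨?_, ?_⟩⟩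
  · rw [← sub_le_iff_le_add]
    refine le_ciInf fun z => ?_
    rw [sub_le_iff_le_add]
    calc A w ≤ h z + L * dist w (G z) := ciInf_le (hbdd w) z
      _ ≤ h z + L * dist w' (G z) + L * dist w w' := by
        rw [add_assoc, ← mul_add, add_comm (dist w' _)]
        gcongr
        exact dist_triangle _ _ _
  · have := ciInf_le (hbdd (G x)) ⟨x, hx⟩
    have := hGh x hx x hx
    simp only [dist_self, mul_zero, add_zero] at *
    linarith
  · rw [sub_le_comm]
    exact le_ciInf fun z => by linarith [hGh x hx z z.2]

theorem exists_continuous_abs_comp_sub_le {X W : Type*} [PseudoMetricSpace W] {G : X → W}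
    {h : X → ℝ} {K : Set X} {C δ ε : ℝ} (hC : ∀ x ∈ K, |h x| ≤ C) (hδ : 0 < δ)
    (hGh : ∀ x ∈ K, ∀ y ∈ K, dist (G x) (G y) ≤ δ → |h x - h y| ≤ ε) :
    ∃ A : W → ℝ, Continuous A ∧ ∀ x ∈ K, |A (G x) - h x| ≤ ε := by
  -- With `L = 2 C / δ`, the term `L * dist` absorbs the oscillation `2 C` of `h` at distance `≥ δ`.
  set L : ℝ≥0 := Real.toNNReal (2 * C / δ)
  have hL : 2 * C ≤ L * δ := by
    rw [← div_le_iff₀ hδ]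
    exact Real.le_coe_toNNReal _
  have hquasi : ∀ x ∈ K, ∀ y ∈ K, h x ≤ h y + ε + L * dist (G x) (G y) := by
    intro x hx y hy
    rcases le_or_gt (dist (G x) (G y)) δ with hclose | hfar
    · have := (abs_le.1 (hGh x hx y hy hclose)).2
      have : 0 ≤ (L : ℝ) * dist (G x) (G y) := by positivity
      linarith
    · have := (abs_le.1 (hC x hx)).2
      have := (abs_le.1 (hC y hy)).1
      have : (L : ℝ) * δ ≤ L * dist (G x) (G y) := by gcongr
      have := hGh x hx x hx (by simpa using hδ.le)
      simp only [sub_self, abs_zero] at this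
      linarith
  obtain ⟨A, hA, hAh⟩ := exists_lipschitzWith_abs_comp_sub_le hquasi
  exact ⟨A, hA.continuous, hAh⟩

theorem discrete_separability_dense_general
    (d m : ℕ) (ρ : Set ((Fin d → ℝ) × (Fin d → ℝ)))
    (f : ℕ → ((Fin d → ℝ) → (Fin m → ℝ))) (hf : ∀ n, Continuous (f n))
    (hsep : sepRel (Set.range f) = ρ)
    (h : (Fin d → ℝ) → ℝ) (hh : Continuous h) (hhρ : ∀ p ∈ ρ, h p.1 = h p.2)
    (K : Set (Fin d → ℝ)) (hK : IsCompact K) (ε : ℝ) (hε : 0 < ε) :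
    ∃ (n : ℕ) (A : (Fin n → (Fin m → ℝ)) → ℝ), Continuous A ∧
      ∀ x ∈ K, |A (fun i => f i x) - h x| < ε := by
  have hfh : ∀ x y, (∀ i, f i x = f i y) → h x = h y := by
    refine fun x y hxy => hhρ (x, y) (hsep ▸ ?_)
    rintro _ ⟨i, rfl⟩
    exact hxy i
  obtain ⟨n, hn⟩ := hK.exists_nat_forall_dist_le_imp_dist_lt hf hh hfh (half_pos hε)
  obtain ⟨C, hC⟩ := hK.exists_bound_of_continuousOn hh.continuousOn
  have hclose : ∀ x ∈ K, ∀ y ∈ K, dist (fun i : Fin n => f i x) (fun i => f i y) ≤ 1 / (n + 1) →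
      |h x - h y| ≤ ε / 2 := fun x hx y hy hxy =>
    (hn x hx y hy fun i hi => (dist_le_pi_dist _ _ ⟨i, hi⟩).trans hxy).le
  obtain ⟨A, hA, hAh⟩ := exists_continuous_abs_comp_sub_le hC Nat.one_div_pos_of_nat hclose
  exact ⟨n, A, hA, fun x hx => (hAh x hx).trans_lt (half_lt_self hε)⟩

/-- Lemma `lemma:discrete_separability`: let `ρ` be a closed equivalence
relation on `V = ℝ^d` and `{f_n}` a countable family of continuous maps `V → ℝ^m` with
`ρ({f_n}) = ρ`.  Then every `h ∈ C_ρ(V)` can be uniformly approximated on every compact set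
by functions of the form `A ∘ (f_0, …, f_{n-1})` with `A` continuous. -/
theorem discrete_separability_dense
    (d m : ℕ) (ρ : Set ((Fin d → ℝ) × (Fin d → ℝ)))
    (hρclosed : IsClosed ρ)
    (hρrefl : ∀ x, (x, x) ∈ ρ)
    (hρsymm : ∀ x y, (x, y) ∈ ρ → (y, x) ∈ ρ)
    (hρtrans : ∀ x y z, (x, y) ∈ ρ → (y, z) ∈ ρ → (x, z) ∈ ρ)
    (f : ℕ → ((Fin d → ℝ) → (Fin m → ℝ))) (hf : ∀ n, Continuous (f n))
    (hsep : sepRel (Set.range f) = ρ)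
    (h : (Fin d → ℝ) → ℝ) (hh : Continuous h) (hhρ : ∀ p ∈ ρ, h p.1 = h p.2)
    (K : Set (Fin d → ℝ)) (hK : IsCompact K) (ε : ℝ) (hε : 0 < ε) :
    ∃ (n : ℕ) (A : (Fin n → (Fin m → ℝ)) → ℝ), Continuous A ∧
      ∀ x ∈ K, |A (fun i => f i x) - h x| < ε :=
  discrete_separability_dense_general d m ρ f hf hsep h hh hhρ K hK ε hε
end

section
/- Let n ≥ 1, let S_n act on ℝ^n by permuting coordinates, let C = { v ↦ x·v + y𝟙 : x, y ∈ ℝ } ⊆ Aff_{S_n}(ℝ^n, ℝ^n) be the width-1 convolutional layer space and P = { v ↦ (x_1 Id + x_2 𝟙𝟙ᵀ)v + y𝟙 : x_1, x_2, y ∈ ℝ } ⊆ Aff_{S_n}(ℝ^n, ℝ^n) the PointNet (DeepSets) layer space, where 𝟙 = (1,…,1)ᵀ. Assume σ : ℝ → ℝ is continuous and not a polynomial. Then the family of first-coordinate projections of U(C, P, C) separates the orbits of Stab_{S_n}(1) := {g ∈ S_n : g(1) = 1} on ℝ^n: whenever α, β ∈ ℝ^n lie in distinct Stab_{S_n}(1)-orbits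 (i.e. there is no permutation g fixing 1 with gα = β), there exists f ∈ U(C, P, C) with π_1(f(α)) ≠ π_1(f(β)), where π_1 is the projection onto the first coordinate. -/
open scoped BigOperators

/-! The network `v ↦ σ(a σ(A v + B) + c ∑ⱼ σ(A vⱼ + B) + b)` of `U(C, P, C)` reads, at the
first coordinate, `σ(A α₁ + B)` and `∑ⱼ σ(A αⱼ + B)` through an outer `σ`, and since `σ` is not
constant a suitable affine map `a, b` (or `c, b`) tells different inputs of that outer `σ` apart.
So if no such network separates `α` from `β`, then `α₁ = β₁` and
`∑ⱼ σ(A αⱼ + B) = ∑ⱼ σ(A βⱼ + B)` for all `A, B`, i.e. `∑ₜ cₜ σ(A t + B) = 0` where `cₜ` is the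
difference of the multiplicities of the value `t` in `α` and in `β`.

Such a relation with some `cₜ ≠ 0` makes a continuous `σ` a polynomial: for a smooth mollification
`g` of `σ`, differentiating `r` times in `A` at `A = 0` gives `(∑ₜ cₜ tʳ) g⁽ʳ⁾ = 0`; for an `r`
with `∑ₜ cₜ tʳ ≠ 0` every mollification is a polynomial of degree `< r`, and so is their pointwise
limit `σ`. Hence `α` and `β` take every value equally often, and as `α₁ = β₁` they differ by a
permutation fixing `1`. -/

open Polynomial Finset Filter Topology MeasureTheory
open scoped ContDiff Convolution Nat

theorem exists_sum_mul_pow_ne_zero {K : Type*} [Field K] [DecidableEq K] {T : Finset K}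
    {c : K → K} {t₀ : K} (ht₀ : t₀ ∈ T) (hc : c t₀ ≠ 0) :
    ∃ r : ℕ, ∑ t ∈ T, c t * t ^ r ≠ 0 := by
  by_contra! h
  have hpoly : ∀ p : K[X], ∑ t ∈ T, c t * p.eval t = 0 := fun p => by
    simp_rw [eval_eq_sum_range, Finset.mul_sum, mul_left_comm (c _)]
    rw [Finset.sum_comm]
    exact Finset.sum_eq_zero fun r _ => by rw [← Finset.mul_sum, h r, mul_zero]
  have hself : (Lagrange.basis T id t₀).eval t₀ = 1 :=
    Lagrange.eval_basis_self (Set.injOn_id _) ht₀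
  have hother : ∀ t ∈ T, t ≠ t₀ → (Lagrange.basis T id t₀).eval t = 0 :=
    fun t ht hne => Lagrange.eval_basis_of_ne (v := id) hne.symm ht
  have hbasis := hpoly (Lagrange.basis T id t₀)
  rw [Finset.sum_eq_single_of_mem t₀ ht₀ fun t ht hne => by rw [hother t ht hne, mul_zero],
    hself, mul_one] at hbasis
  exact hc hbasis

theorem iteratedDeriv_sum_mul_comp_mul_add {𝕜 : Type*} [NontriviallyNormedField 𝕜] {g : 𝕜 → 𝕜}
    {r : ℕ} (hg : ContDiff 𝕜 r g) (T : Finset 𝕜) (c : 𝕜 → 𝕜) (B : 𝕜) :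
    iteratedDeriv r (fun A => ∑ t ∈ T, c t * g (A * t + B)) 0 =
      (∑ t ∈ T, c t * t ^ r) * iteratedDeriv r g B := by
  have hshift : ContDiff 𝕜 r fun z => g (z + B) := hg.comp (contDiff_id.add contDiff_const)
  rw [iteratedDeriv_fun_sum fun t _ => by fun_prop, Finset.sum_mul]
  refine Finset.sum_congr rfl fun t _ => ?_
  have hcomp : (fun A => g (A * t + B)) = fun A => (fun z => g (z + B)) (t * A) := by
    ext A; rw [mul_comm]
  rw [iteratedDeriv_const_mul_field, hcomp, iteratedDeriv_comp_const_mul hshift,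
    iteratedDeriv_comp_add_const]
  simp only [mul_zero, zero_add, mul_assoc]

theorem exists_degreeLT_of_iteratedDeriv_eq_zero {f : ℝ → ℝ} {n : ℕ} (hf : ContDiff ℝ n f)
    (h : iteratedDeriv n f = 0) : ∃ p ∈ degreeLT ℝ n, ∀ x, f x = p.eval x := by
  cases n with
  | zero => exact ⟨0, zero_mem _, fun x => by simpa using congrFun h x⟩
  | succ m =>
    refine ⟨∑ k ∈ range (m + 1), C ((k ! : ℝ)⁻¹ * iteratedDeriv k f 0) * X ^ k,
      sum_mem fun k hk => ?_, fun x => ?_⟩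
    · rw [mem_degreeLT]
      exact (degree_C_mul_X_pow_le k _).trans_lt (by exact_mod_cast Finset.mem_range.mp hk)
    rcases eq_or_ne x 0 with rfl | hx
    · simp [eval_finsetSum, Finset.sum_range_succ']
    obtain ⟨x', -, hrem⟩ := taylor_mean_remainder_lagrange_iteratedDeriv hx.symm hf.contDiffOn
    rw [h, Pi.zero_apply, zero_mul, zero_div, sub_eq_zero, taylor_within_apply] at hrem
    rw [hrem, eval_finsetSum]
    refine Finset.sum_congr rfl fun k hk => ?_
    rw [iteratedDerivWithin_eq_iteratedDeriv (uniqueDiffOn_uIcc hx.symm)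
      (hf.contDiffAt.of_le (by exact_mod_cast (Finset.mem_range.mp hk).le)) Set.left_mem_uIcc]
    simp only [eval_mul, eval_C, eval_pow, eval_X, sub_zero, smul_eq_mul]
    ring

theorem exists_degreeLT_of_sum_mul_comp_affine_eq_zero {g : ℝ → ℝ} {r : ℕ} (hg : ContDiff ℝ r g)
    {T : Finset ℝ} {c : ℝ → ℝ} (hrel : ∀ A B, ∑ t ∈ T, c t * g (A * t + B) = 0)
    (hr : ∑ t ∈ T, c t * t ^ r ≠ 0) : ∃ p ∈ degreeLT ℝ r, ∀ x, g x = p.eval x := by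
  refine exists_degreeLT_of_iteratedDeriv_eq_zero hg (funext fun B => ?_)
  have h := iteratedDeriv_sum_mul_comp_mul_add hg T c B
  rw [show (fun A => ∑ t ∈ T, c t * g (A * t + B)) = fun _ => 0 from funext fun A => hrel A B,
    iteratedDeriv_const, ite_self] at h
  exact (mul_eq_zero.mp h.symm).resolve_left hr

theorem sum_mul_convolution_comp_affine_eq_zero {ψ σ : ℝ → ℝ} (hψ : Continuous ψ)
    (hψc : HasCompactSupport ψ) (hσ : Continuous σ) {T : Finset ℝ} {c : ℝ → ℝ}
    (hrel : ∀ A B, ∑ t ∈ T, c t * σ (A * t + B) = 0) (A B : ℝ) :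
    ∑ t ∈ T, c t * (ψ ⋆[ContinuousLinearMap.lsmul ℝ ℝ, volume] σ) (A * t + B) = 0 := by
  have hint : ∀ x, Integrable (fun y => ψ y * σ (x - y)) := fun x =>
    (hψ.mul (hσ.comp (continuous_const.sub continuous_id))).integrable_of_hasCompactSupport
      hψc.mul_right
  simp_rw [convolution_lsmul, smul_eq_mul, ← integral_const_mul]
  rw [← integral_finsetSum _ fun t _ => (hint _).const_mul (c t)]
  have hpt : ∀ y, ∑ t ∈ T, c t * (ψ y * σ (A * t + B - y)) = 0 := fun y => by
    simp_rw [mul_left_comm (c _), ← Finset.mul_sum, add_sub_assoc, hrel, mul_zero]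
  simp [hpt]

theorem exists_degreeLT_of_tendsto {ι : Type*} {l : Filter ι} [l.NeBot] {g : ι → ℝ → ℝ}
    {f : ℝ → ℝ} {n : ℕ} (hg : ∀ k, ∃ p ∈ degreeLT ℝ n, ∀ x, g k x = p.eval x)
    (hlim : ∀ x, Tendsto (g · x) l (𝓝 (f x))) : ∃ p ∈ degreeLT ℝ n, ∀ x, f x = p.eval x := by
  set s := Finset.range n
  have hinj : Set.InjOn (fun i : ℕ => (i : ℝ)) s := fun a _ b _ h => Nat.cast_injective h
  have heval : ∀ (w : ℕ → ℝ) (x : ℝ), (Lagrange.interpolate s (↑) w).eval x =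
      ∑ i ∈ s, w i * (Lagrange.basis s (fun i : ℕ => (i : ℝ)) i).eval x := fun w x => by
    simp [Lagrange.interpolate_apply, eval_finsetSum]
  have hinterp : ∀ k x, g k x = (Lagrange.interpolate s (↑) fun i => g k i).eval x := by
    intro k x
    obtain ⟨p, hp, hpg⟩ := hg k
    have hdeg : p.degree < s.card := by simpa [s] using mem_degreeLT.mp hp
    rw [hpg, Lagrange.eq_interpolate hinj hdeg]
    simp_rw [hpg]
  refine ⟨Lagrange.interpolate s (↑) fun i => f i, mem_degreeLT.mpr ?_, fun x => ?_⟩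
  · simpa [s] using Lagrange.degree_interpolate_lt (fun i : ℕ => f i) hinj
  refine tendsto_nhds_unique (hlim x) ?_
  simp_rw [hinterp _ x, heval]
  exact tendsto_finsetSum s fun i _ => (hlim i).mul_const _

theorem exists_polynomial_of_sum_mul_comp_affine_eq_zero {σ : ℝ → ℝ} (hσ : Continuous σ)
    {T : Finset ℝ} {c : ℝ → ℝ} (hrel : ∀ A B, ∑ t ∈ T, c t * σ (A * t + B) = 0) {t₀ : ℝ}
    (ht₀ : t₀ ∈ T) (hc : c t₀ ≠ 0) : ∃ p : ℝ[X], ∀ x, σ x = p.eval x := by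
  classical
  obtain ⟨r, hr⟩ := exists_sum_mul_pow_ne_zero ht₀ hc
  let ψ : ℕ → ContDiffBump (0 : ℝ) := fun k =>
    ⟨1 / (k + 1) / 2, 1 / (k + 1), by positivity, half_lt_self (by positivity)⟩
  let g : ℕ → ℝ → ℝ := fun k => (ψ k).normed volume ⋆[ContinuousLinearMap.lsmul ℝ ℝ, volume] σ
  have hg : ∀ k, ContDiff ℝ r (g k) := fun k =>
    ((ψ k).hasCompactSupport_normed.contDiff_convolution_left _ (ψ k).contDiff_normed
      hσ.locallyIntegrable).of_le (by exact_mod_cast le_top)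
  have hgrel : ∀ k A B, ∑ t ∈ T, c t * g k (A * t + B) = 0 := fun k =>
    sum_mul_convolution_comp_affine_eq_zero (ψ k).continuous_normed
      (ψ k).hasCompactSupport_normed hσ hrel
  have hlim : ∀ x, Tendsto (g · x) atTop (𝓝 (σ x)) :=
    ContDiffBump.convolution_tendsto_right_of_continuous
      tendsto_one_div_add_atTop_nhds_zero_nat hσ
  obtain ⟨p, -, hp⟩ := exists_degreeLT_of_tendsto
    (fun k => exists_degreeLT_of_sum_mul_comp_affine_eq_zero (hg k) (hgrel k) hr) hlim
  exact ⟨p, hp⟩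

theorem NotPolynomial.exists_ne {σ : ℝ → ℝ} (hσ : NotPolynomial σ) : ∃ x y, σ x ≠ σ y := by
  by_contra! h
  exact hσ ⟨C (σ 0), fun x => by rw [h x 0, eval_C]⟩

theorem eq_of_forall_comp_affine_eq {σ : ℝ → ℝ} (hσ : ∃ x y, σ x ≠ σ y) {x y : ℝ}
    (h : ∀ a b, σ (a * x + b) = σ (a * y + b)) : x = y := by
  obtain ⟨p, q, hpq⟩ := hσ
  by_contra hxy
  have hd : y - x ≠ 0 := sub_ne_zero.mpr (Ne.symm hxy)
  have hx : (q - p) / (y - x) * x + (p - (q - p) / (y - x) * x) = p := by ring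
  have hy : (q - p) / (y - x) * y + (p - (q - p) / (y - x) * x) = q := by field_simp; ring
  exact hpq (by simpa only [hx, hy] using h ((q - p) / (y - x)) (p - (q - p) / (y - x) * x))

theorem sum_comp_eq_sum_card_fiber_smul {ι κ M : Type*} [Fintype ι] [DecidableEq κ]
    [AddCommMonoid M] (γ : ι → κ) {T : Finset κ} (hT : ∀ i, γ i ∈ T) (f : κ → M) :
    ∑ i, f (γ i) = ∑ t ∈ T, #{i | γ i = t} • f t := by
  rw [← Finset.sum_fiberwise_of_maps_to fun i _ => hT i]
  refine Finset.sum_congr rfl fun t _ => ?_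
  rw [Finset.sum_congr rfl fun i hi => by rw [(Finset.mem_filter.mp hi).2], Finset.sum_const]

theorem NotPolynomial.card_fiber_eq_of_sum_comp_affine_eq {σ : ℝ → ℝ} (hσp : NotPolynomial σ)
    (hσc : Continuous σ) {ι : Type*} [Fintype ι] {α β : ι → ℝ}
    (h : ∀ A B, ∑ i, σ (A * α i + B) = ∑ i, σ (A * β i + B)) (t : ℝ) :
    #{i | α i = t} = #{i | β i = t} := by
  classical
  let T := insert t (univ.image α ∪ univ.image β)
  have hα : ∀ i, α i ∈ T := fun i => by simp [T]
  have hβ : ∀ i, β i ∈ T := fun i => by simp [T]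
  have hrel : ∀ A B, ∑ s ∈ T, ((#{i | α i = s} : ℝ) - #{i | β i = s}) * σ (A * s + B) = 0 := by
    intro A B
    simp_rw [sub_mul, Finset.sum_sub_distrib, ← nsmul_eq_mul,
      ← sum_comp_eq_sum_card_fiber_smul α hα, ← sum_comp_eq_sum_card_fiber_smul β hβ, h, sub_self]
  by_contra hne
  exact hσp (exists_polynomial_of_sum_mul_comp_affine_eq_zero hσc hrel (mem_insert_self t _)
    (sub_ne_zero.mpr (by exact_mod_cast hne)))

theorem exists_perm_fixing_of_card_fiber_eq {ι κ : Type*} [Fintype ι] [DecidableEq ι]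
    [DecidableEq κ] {α β : ι → κ} (h : ∀ t, #{i | α i = t} = #{i | β i = t}) {i₀ : ι}
    (h₀ : α i₀ = β i₀) : ∃ e : Equiv.Perm ι, e i₀ = i₀ ∧ ∀ i, β (e i) = α i := by
  have hfib : ∀ t, Fintype.card {i // α i = t} = Fintype.card {i // β i = t} := fun t => by
    simp only [Fintype.card_subtype, h]
  let e : Equiv.Perm ι := Equiv.ofFiberEquiv fun t => Fintype.equivOfCardEq (hfib t)
  have he : ∀ i, β (e i) = α i := Equiv.ofFiberEquiv_map _
  have hswap : ∀ j, β (Equiv.swap (e i₀) i₀ j) = β j := fun j => by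
    rw [Equiv.swap_apply_def]
    split_ifs with h₁ h₂
    · rw [h₁, he, h₀]
    · rw [h₂, he, h₀]
    · rfl
  exact ⟨Equiv.swap (e i₀) i₀ * e, Equiv.swap_apply_left _ _, fun i => by
    rw [Equiv.Perm.mul_apply, hswap, he]⟩

theorem subset_unifClosure {A B : Type} [TopologicalSpace A] [PseudoMetricSpace B]
    (S : Set (A → B)) : S ⊆ UnifClosure S :=
  fun F hF _ _ ε hε => ⟨F, hF, fun x _ => by rwa [dist_self]⟩

theorem singleChannel_network_mem_UClass3 (n : ℕ) (σ : ℝ → ℝ) (A B a c b : ℝ) :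
    (fun (v : Fin n → ℝ) z => σ (a * σ (A * v z + B) + c * ∑ j, σ (A * v j + B) + b)) ∈
      UClass3 σ (ConvC n) (PointNetP n) (ConvC n) := by
  refine subset_unifClosure _ ⟨1, 1, fun v p => A * v p.2 + B,
    ⟨fun _ v i => A * v i + B, fun _ => ⟨A, B, rfl⟩, fun _ _ => rfl⟩,
    fun w p => ∑ j : Fin 1, (a * w (j, p.2) + c * ∑ i, w (j, i) + b),
    ⟨fun _ _ v i => a * v i + c * ∑ j, v j + b, fun _ _ => ⟨a, c, b, rfl⟩, fun _ _ => rfl⟩,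
    fun u z => ∑ j : Fin 1, (1 * u (j, z) + 0),
    ⟨fun _ v i => 1 * v i + 0, fun _ => ⟨1, 0, rfl⟩, fun _ _ => rfl⟩, ?_⟩
  funext v z
  simp [act]

/-- Lemma `lemma:stabilizer-orbits`: the first-coordinate projections of
`U(C, P, C)` separate the orbits of the stabilizer of the first coordinate in `S_n` on
`ℝ^n`: if `α, β` lie in distinct `Stab_{S_n}(1)`-orbits, then some `F ∈ U(C, P, C)`
satisfies `π₁(F(α)) ≠ π₁(F(β))`. -/
theorem UCPC_projections_separate_stabilizer_orbits
    (n : ℕ) (hn : 1 ≤ n) (σ : ℝ → ℝ) (hσc : Continuous σ) (hσp : NotPolynomial σ)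
    (α β : Fin n → ℝ)
    (horb : ¬ ∃ gp : Equiv.Perm (Fin n), gp ⟨0, hn⟩ = ⟨0, hn⟩ ∧
        (fun i => α (gp⁻¹ i)) = β) :
    ∃ F ∈ UClass3 σ (ConvC n) (PointNetP n) (ConvC n),
      F α ⟨0, hn⟩ ≠ F β ⟨0, hn⟩ := by
  set i₀ : Fin n := ⟨0, hn⟩
  by_contra! hsep
  have hnet (A B a c b : ℝ) :
      σ (a * σ (A * α i₀ + B) + c * ∑ j, σ (A * α j + B) + b) =
        σ (a * σ (A * β i₀ + B) + c * ∑ j, σ (A * β j + B) + b) :=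
    hsep _ (singleChannel_network_mem_UClass3 n σ A B a c b)
  have hσ := hσp.exists_ne
  have hfirst (A B : ℝ) : σ (A * α i₀ + B) = σ (A * β i₀ + B) :=
    eq_of_forall_comp_affine_eq hσ fun a b => by simpa using hnet A B a 0 b
  have hsum (A B : ℝ) : ∑ i, σ (A * α i + B) = ∑ i, σ (A * β i + B) :=
    eq_of_forall_comp_affine_eq hσ fun c b => by simpa using hnet A B 0 c b
  obtain ⟨e, he₀, he⟩ := exists_perm_fixing_of_card_fiber_eq
    (hσp.card_fiber_eq_of_sum_comp_affine_eq hσc hsum) (eq_of_forall_comp_affine_eq hσ hfirst)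
  exact horb ⟨e, he₀, funext fun i => by simpa using (he (e⁻¹ i)).symm⟩
end
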